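/- arXiv:2003.10216 — 7 statements merged into one kernel-verified Lean document; each statement's English description precedes it below -/
import Mathlib

section
/- Let X carry two topologies τ₁, τ₂ and a preorder ≼. The graph of ≼ is closed in (X × X, τ₁ × τ₂) if and only if for every pair of points a, b ∈ X with ¬(a ≼ b) there exist an increasing τ₁-neighborhood V_a of a and a decreasing τ₂-neighborhood V_b of b with V_a ∩ V_b = ∅. -/
/-- In a bitopological preordered space `(X, τ₁, τ₂, ≼)`, the graph of `≼`
is closed in `(X × X, τ₁ × τ₂)` iff for all `a, b` with `¬ a ≼ b` there are an increasing
`τ₁`-neighborhood `Va` of `a` and a decreasing `τ₂`-neighborhood `Vb` of `b` which are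
disjoint. -/
theorem stmt2 {X : Type*} [Preorder X] (τ₁ τ₂ : TopologicalSpace X) :
    @IsClosed (X × X) (@instTopologicalSpaceProd X X τ₁ τ₂)
      {p : X × X | p.1 ≤ p.2} ↔
    ∀ a b : X, ¬ a ≤ b →
      ∃ Va Vb : Set X,
        (∃ U, @IsOpen X τ₁ U ∧ a ∈ U ∧ U ⊆ Va) ∧
        (∀ x y, x ∈ Va → x ≤ y → y ∈ Va) ∧
        (∃ U, @IsOpen X τ₂ U ∧ b ∈ U ∧ U ⊆ Vb) ∧
        (∀ x y, x ∈ Vb → y ≤ x → y ∈ Vb) ∧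
        Va ∩ Vb = ∅ := by
  constructor
  · intro h a b hab
    have hopen := @IsClosed.isOpen_compl (X × X) _ _ h
    rw [@isOpen_prod_iff X X τ₁ τ₂] at hopen
    obtain ⟨U, W, hU, hW, haU, hbW, hsub⟩ := hopen a b hab
    refine ⟨{y | ∃ x ∈ U, x ≤ y}, {y | ∃ x ∈ W, y ≤ x},
      ⟨U, hU, haU, fun x hx => ⟨x, hx, le_refl x⟩⟩, ?_,
      ⟨W, hW, hbW, fun x hx => ⟨x, hx, le_refl x⟩⟩, ?_, ?_⟩
    · rintro x y ⟨u, hu, hux⟩ hxy; exact ⟨u, hu, hux.trans hxy⟩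
    · rintro x y ⟨w, hw, hxw⟩ hyx; exact ⟨w, hw, hyx.trans hxw⟩
    · ext z
      simp only [Set.mem_inter_iff, Set.mem_setOf_eq, Set.mem_empty_iff_false, iff_false]
      rintro ⟨⟨u, hu, huz⟩, ⟨w, hw, hzw⟩⟩
      exact hsub (Set.mk_mem_prod hu hw) (huz.trans hzw)
  · intro h
    rw [← @isOpen_compl_iff, @isOpen_prod_iff X X τ₁ τ₂]
    intro a b hab
    obtain ⟨Va, Vb, ⟨U, hU, haU, hUVa⟩, hinc, ⟨W, hW, hbW, hWVb⟩, hdec, hdisj⟩ := h a b hab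
    refine ⟨U, W, hU, hW, haU, hbW, ?_⟩
    rintro ⟨x, y⟩ ⟨hx, hy⟩ hxy
    have hmem : y ∈ Va ∩ Vb := ⟨hinc x y (hUVa hx) hxy, hWVb hy⟩
    rw [hdisj] at hmem
    exact hmem
end

section
/- A bitopological ordered space (X, τ₁, τ₂, ≼) is pairwise normally ordered if and only if for every decreasing τ₁-closed set A and increasing τ₂-closed set B with A ∩ B = ∅, there exists an increasing function f : X → [0,1] which is τ₁-lower semicontinuous and τ₂-upper semicontinuous, with f = 0 on A and f = 1 on B. -/
namespace S9

variable {X : Type*} [PartialOrder X]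

/-- `S` is a decreasing (lower) set. -/
def Dec (S : Set X) : Prop := ∀ x y, x ∈ S → y ≤ x → y ∈ S

/-- `S` is an increasing (upper) set. -/
def Inc (S : Set X) : Prop := ∀ x y, x ∈ S → x ≤ y → y ∈ S

/-- Pairwise normally ordered. -/
def PN (τ₁ τ₂ : TopologicalSpace X) : Prop :=
  ∀ A B : Set X, Dec A → @IsClosed X τ₁ A → Inc B → @IsClosed X τ₂ B → A ∩ B = ∅ →
    ∃ O₁ O₂ : Set X, @IsOpen X τ₂ O₁ ∧ Dec O₁ ∧ A ⊆ O₁ ∧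
      @IsOpen X τ₁ O₂ ∧ Inc O₂ ∧ B ⊆ O₂ ∧ O₁ ∩ O₂ = ∅

lemma step {τ₁ τ₂ : TopologicalSpace X} (h : PN τ₁ τ₂) {C V : Set X}
    (hCd : Dec C) (hCc : @IsClosed X τ₁ C) (hVd : Dec V) (hVo : @IsOpen X τ₂ V)
    (hCV : C ⊆ V) :
    ∃ W D : Set X, @IsOpen X τ₂ W ∧ Dec W ∧ @IsClosed X τ₁ D ∧ Dec D ∧
      C ⊆ W ∧ W ⊆ D ∧ D ⊆ V := by
  have hVci : Inc Vᶜ := by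
    intro x y hx hxy hyV
    exact hx (hVd y x hyV hxy)
  have hVcc : @IsClosed X τ₂ Vᶜ := @IsOpen.isClosed_compl X τ₂ V hVo
  have hdisj : C ∩ Vᶜ = ∅ := by
    ext z; simp only [Set.mem_inter_iff, Set.mem_compl_iff, Set.mem_empty_iff_false,
      iff_false, not_and, not_not]
    exact fun hz => hCV hz
  obtain ⟨O₁, O₂, h1o, h1d, hCO, h2o, h2i, hVB, hOO⟩ := h C Vᶜ hCd hCc hVci hVcc hdisj
  refine ⟨O₁, O₂ᶜ, h1o, h1d, @IsOpen.isClosed_compl X τ₁ O₂ h2o, ?_, hCO, ?_, ?_⟩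
  · intro x y hx hxy hyO
    exact hx (h2i y x hyO hxy)
  · intro x hx hxO
    have : x ∈ O₁ ∩ O₂ := ⟨hx, hxO⟩
    rw [hOO] at this; exact this
  · intro x hx
    by_contra hxV
    exact hx (hVB hxV)

/-- The double-indexed family of sets: `fam … n k` corresponds to the dyadic `k / 2^n`. -/
def fam (w d : Set X → Set X → Set X) (p0 p1 : Set X × Set X) : ℕ → ℕ → Set X × Set X
  | 0 => fun k => if k = 0 then p0 else p1
  | (n+1) => fun k =>
      if k % 2 = 0 then fam w d p0 p1 n (k / 2)
      else (w (fam w d p0 p1 n (k / 2)).2 (fam w d p0 p1 n (k / 2 + 1)).1,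
            d (fam w d p0 p1 n (k / 2)).2 (fam w d p0 p1 n (k / 2 + 1)).1)

lemma fam_even (w d : Set X → Set X → Set X) (p0 p1 : Set X × Set X) (n j : ℕ) :
    fam w d p0 p1 (n+1) (2*j) = fam w d p0 p1 n j := by
  have h1 : (2*j) % 2 = 0 := Nat.mul_mod_right 2 j
  have h2 : (2*j) / 2 = j := by omega
  simp only [fam, h1, h2, if_true, reduceIte]

lemma fam_odd (w d : Set X → Set X → Set X) (p0 p1 : Set X × Set X) (n j : ℕ) :
    fam w d p0 p1 (n+1) (2*j+1) =
      (w (fam w d p0 p1 n j).2 (fam w d p0 p1 n (j+1)).1,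
       d (fam w d p0 p1 n j).2 (fam w d p0 p1 n (j+1)).1) := by
  have h1 : ¬ ((2*j+1) % 2 = 0) := by omega
  have h2 : (2*j+1) / 2 = j := by omega
  simp only [fam, h1, h2, if_false, reduceIte]

lemma dyadic_btwn {x y : ℝ} (hx : 0 ≤ x) (hxy : x < y) :
    ∃ (n k : ℕ), x < (k:ℝ)/2^n ∧ (k:ℝ)/2^n < y := by
  obtain ⟨n, hn⟩ : ∃ n : ℕ, (y - x)⁻¹ < 2^n := pow_unbounded_of_one_lt _ one_lt_two
  have h2 : (0:ℝ) < 2^n := by positivity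
  have hyx : (0:ℝ) < y - x := by linarith
  have hkey : 1 < (y - x) * 2^n := by
    nlinarith [mul_lt_mul_of_pos_left hn hyx, mul_inv_cancel₀ (ne_of_gt hyx)]
  refine ⟨n, ⌊x * 2^n⌋₊ + 1, ?_, ?_⟩
  · rw [lt_div_iff₀ h2]
    have := Nat.lt_floor_add_one (x * 2^n)
    push_cast
    linarith
  · rw [div_lt_iff₀ h2]
    have hfl : (⌊x * 2^n⌋₊ : ℝ) ≤ x * 2^n := Nat.floor_le (by positivity)
    push_cast
    nlinarith

lemma urysohn {τ₁ τ₂ : TopologicalSpace X} (hPN : PN τ₁ τ₂) {A B : Set X}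
    (hAd : Dec A) (hAc : @IsClosed X τ₁ A) (hBi : Inc B) (hBc : @IsClosed X τ₂ B)
    (hAB : A ∩ B = ∅) :
    ∃ f : X → ℝ,
      (∀ x, f x ∈ Set.Icc (0 : ℝ) 1) ∧
      (∀ x y, x ≤ y → f x ≤ f y) ∧
      (∀ a : ℝ, @IsOpen X τ₁ {x | a < f x}) ∧
      (∀ a : ℝ, @IsOpen X τ₂ {x | f x < a}) ∧
      (∀ x ∈ A, f x = 0) ∧ (∀ x ∈ B, f x = 1) := by
  classical
  obtain ⟨O₁, O₂, hO₁o, hO₁d, hAO, hO₂o, hO₂i, hBO, hdisj⟩ := hPN A B hAd hAc hBi hBc hAB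
  -- a total choice function for the interpolation step
  have hstep : ∀ C V : Set X, ∃ WD : Set X × Set X,
      Dec C → @IsClosed X τ₁ C → Dec V → @IsOpen X τ₂ V → C ⊆ V →
      (@IsOpen X τ₂ WD.1 ∧ Dec WD.1 ∧ @IsClosed X τ₁ WD.2 ∧ Dec WD.2 ∧
        C ⊆ WD.1 ∧ WD.1 ⊆ WD.2 ∧ WD.2 ⊆ V) := by
    intro C V
    by_cases H : Dec C ∧ @IsClosed X τ₁ C ∧ Dec V ∧ @IsOpen X τ₂ V ∧ C ⊆ V
    · obtain ⟨W, D, hW⟩ := step hPN H.1 H.2.1 H.2.2.1 H.2.2.2.1 H.2.2.2.2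
      exact ⟨(W, D), fun _ _ _ _ _ => hW⟩
    · exact ⟨(∅, ∅), fun h1 h2 h3 h4 h5 => absurd ⟨h1, h2, h3, h4, h5⟩ H⟩
  choose WD hWD using hstep
  set F : ℕ → ℕ → Set X × Set X :=
    fam (fun C V => (WD C V).1) (fun C V => (WD C V).2) (O₁, O₂ᶜ) (Bᶜ, Set.univ) with hF
  have hFe : ∀ n j, F (n+1) (2*j) = F n j := fun n j => by
    rw [hF]; exact fam_even _ _ _ _ n j
  have hFo : ∀ n j, F (n+1) (2*j+1) = WD (F n j).2 (F n (j+1)).1 := fun n j => by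
    rw [hF]; exact fam_odd _ _ _ _ n j
  have hF00 : F 0 0 = (O₁, O₂ᶜ) := by rw [hF]; simp [fam]
  have hF01 : F 0 1 = (Bᶜ, Set.univ) := by rw [hF]; simp [fam]
  -- the invariant
  have inv : ∀ n, (∀ k, k ≤ 2^n →
      @IsOpen X τ₂ (F n k).1 ∧ Dec (F n k).1 ∧ @IsClosed X τ₁ (F n k).2 ∧
        Dec (F n k).2 ∧ (F n k).1 ⊆ (F n k).2) ∧
      (∀ k, k < 2^n → (F n k).2 ⊆ (F n (k+1)).1) := by
    intro n
    induction n with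
    | zero =>
      constructor
      · intro k hk
        interval_cases k
        · rw [hF00]
          refine ⟨hO₁o, hO₁d, @IsOpen.isClosed_compl X τ₁ O₂ hO₂o, ?_, ?_⟩
          · intro x y hx hxy hyO
            exact hx (hO₂i y x hyO hxy)
          · intro x hx hxO
            have : x ∈ O₁ ∩ O₂ := ⟨hx, hxO⟩
            rw [hdisj] at this; exact this
        · rw [hF01]
          refine ⟨@IsClosed.isOpen_compl X τ₂ B hBc, ?_, @isClosed_univ X τ₁, fun _ _ _ _ => trivial,
            Set.subset_univ _⟩
          intro x y hx hxy hyB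
          exact hx (hBi y x hyB hxy)
      · intro k hk
        have hk0 : k = 0 := by omega
        subst hk0
        rw [hF00, hF01]
        intro x hx
        simp only [Set.mem_compl_iff]
        intro hxB
        exact hx (hBO hxB)
    | succ n ih =>
      have h2n : 2^(n+1) = 2 * 2^n := by ring
      constructor
      · intro k hk
        rcases Nat.even_or_odd k with ⟨j, hj⟩ | ⟨j, hj⟩
        · have hj' : k = 2 * j := by omega
          subst hj'
          rw [hFe]
          exact ih.1 j (by omega)
        · subst hj
          have hjlt : j < 2^n := by omega
          rw [hFo]
          obtain ⟨hWo, hWd, hDc, hDd, hCW, hWD', hDV⟩ :=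
            hWD (F n j).2 (F n (j+1)).1
              (ih.1 j (by omega)).2.2.2.1 (ih.1 j (by omega)).2.2.1
              (ih.1 (j+1) (by omega)).2.1 (ih.1 (j+1) (by omega)).1
              (ih.2 j hjlt)
          exact ⟨hWo, hWd, hDc, hDd, hWD'⟩
      · intro k hk
        rcases Nat.even_or_odd k with ⟨j, hj⟩ | ⟨j, hj⟩
        · have hj' : k = 2 * j := by omega
          subst hj'
          have hjlt : j < 2^n := by omega
          rw [hFe, hFo]
          exact (hWD (F n j).2 (F n (j+1)).1
              (ih.1 j (by omega)).2.2.2.1 (ih.1 j (by omega)).2.2.1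
              (ih.1 (j+1) (by omega)).2.1 (ih.1 (j+1) (by omega)).1
              (ih.2 j hjlt)).2.2.2.2.1
        · subst hj
          have hjlt : j < 2^n := by omega
          have he : 2*j+1+1 = 2*(j+1) := by ring
          rw [hFo, he, hFe]
          exact (hWD (F n j).2 (F n (j+1)).1
              (ih.1 j (by omega)).2.2.2.1 (ih.1 j (by omega)).2.2.1
              (ih.1 (j+1) (by omega)).2.1 (ih.1 (j+1) (by omega)).1
              (ih.2 j hjlt)).2.2.2.2.2.2
  -- endpoints
  have hzero : ∀ n, F n 0 = (O₁, O₂ᶜ) := by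
    intro n
    induction n with
    | zero => exact hF00
    | succ n ih =>
      have := hFe n 0
      simp only [Nat.mul_zero] at this
      rw [this, ih]
  have htop : ∀ n, F n (2^n) = (Bᶜ, Set.univ) := by
    intro n
    induction n with
    | zero => exact hF01
    | succ n ih =>
      have h2n : 2^(n+1) = 2 * 2^n := by ring
      rw [h2n, hFe, ih]
  -- scaling across levels
  have hscale : ∀ m n k, F (n + m) (2^m * k) = F n k := by
    intro m
    induction m with
    | zero => intro n k; simp
    | succ m ih =>
      intro n k
      have h1 : 2^(m+1) * k = 2 * (2^m * k) := by ring
      have h2 : n + (m+1) = (n + m) + 1 := rfl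
      rw [h1, h2, hFe]
      exact ih n k
  -- monotonicity within a level
  have monoC : ∀ n k, k ≤ 2^n → ∀ j, j ≤ k → (F n j).2 ⊆ (F n k).2 := by
    intro n k
    induction k with
    | zero =>
      intro _ j hj
      have : j = 0 := by omega
      subst this; exact subset_rfl
    | succ k ih =>
      intro hk j hj
      rcases Nat.eq_or_lt_of_le hj with rfl | hjk
      · exact subset_rfl
      · have h1 : (F n j).2 ⊆ (F n k).2 := ih (by omega) j (by omega)
        have h2 : (F n k).2 ⊆ (F n (k+1)).1 := (inv n).2 k (by omega)
        have h3 : (F n (k+1)).1 ⊆ (F n (k+1)).2 := ((inv n).1 (k+1) hk).2.2.2.2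
        exact h1.trans (h2.trans h3)
  have hUC : ∀ n j k, j ≤ k → k ≤ 2^n → (F n j).1 ⊆ (F n k).2 := by
    intro n j k hjk hk
    exact ((inv n).1 j (hjk.trans hk)).2.2.2.2.trans (monoC n k hk j hjk)
  have hCU : ∀ n j k, j < k → k ≤ 2^n → (F n j).2 ⊆ (F n k).1 := by
    intro n j k hjk hk
    obtain ⟨m, rfl⟩ : ∃ m, k = m + 1 := ⟨k - 1, by omega⟩
    exact (monoC n m (by omega) j (by omega)).trans ((inv n).2 m (by omega))
  -- comparison across levels
  have crossUC : ∀ m j n k, j ≤ 2^m → k ≤ 2^n → j * 2^n ≤ k * 2^m →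
      (F m j).1 ⊆ (F n k).2 := by
    intro m j n k hj hk hjk
    have e1 : F m j = F (m + n) (2^n * j) := (hscale n m j).symm
    have e2 : F n k = F (m + n) (2^m * k) := by
      rw [Nat.add_comm m n]; exact (hscale m n k).symm
    rw [e1, e2]
    refine hUC (m+n) (2^n * j) (2^m * k) (by rw [Nat.mul_comm, Nat.mul_comm (2^m)]; exact hjk) ?_
    calc 2^m * k ≤ 2^m * 2^n := Nat.mul_le_mul_left _ hk
    _ = 2^(m+n) := (pow_add 2 m n).symm
  have crossCU : ∀ m j n k, j ≤ 2^m → k ≤ 2^n → j * 2^n < k * 2^m →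
      (F m j).2 ⊆ (F n k).1 := by
    intro m j n k hj hk hjk
    have e1 : F m j = F (m + n) (2^n * j) := (hscale n m j).symm
    have e2 : F n k = F (m + n) (2^m * k) := by
      rw [Nat.add_comm m n]; exact (hscale m n k).symm
    rw [e1, e2]
    refine hCU (m+n) (2^n * j) (2^m * k) (by rw [Nat.mul_comm, Nat.mul_comm (2^m)]; exact hjk) ?_
    calc 2^m * k ≤ 2^m * 2^n := Nat.mul_le_mul_left _ hk
    _ = 2^(m+n) := (pow_add 2 m n).symm
  -- the function
  set S : X → Set ℝ := fun x =>
    {1} ∪ {r | ∃ n k : ℕ, k ≤ 2^n ∧ x ∈ (F n k).1 ∧ r = (k:ℝ)/2^n} with hS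
  have hSne : ∀ x, (S x).Nonempty := fun x => ⟨1, Or.inl rfl⟩
  have hSbd : ∀ x, ∀ r ∈ S x, (0:ℝ) ≤ r := by
    rintro x r (rfl | ⟨n, k, _, _, rfl⟩)
    · norm_num
    · positivity
  have hBdd : ∀ x, BddBelow (S x) := fun x => ⟨0, hSbd x⟩
  have hle1 : ∀ x, sInf (S x) ≤ 1 := fun x => csInf_le (hBdd x) (Or.inl rfl)
  have hge0 : ∀ x, 0 ≤ sInf (S x) := fun x => le_csInf (hSne x) (hSbd x)
  refine ⟨fun x => sInf (S x), fun x => ⟨hge0 x, hle1 x⟩, ?_, ?_, ?_, ?_, ?_⟩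
  · -- monotone
    intro x y hxy
    refine csInf_le_csInf (hBdd x) (hSne y) ?_
    rintro r (rfl | ⟨n, k, hk, hm, rfl⟩)
    · exact Or.inl rfl
    · exact Or.inr ⟨n, k, hk, ((inv n).1 k hk).2.1 y x hm hxy, rfl⟩
  · -- lower semicontinuity (τ₁)
    intro a
    by_cases ha : 0 ≤ a
    · have hset : {x | a < sInf (S x)} =
          ⋃ (n : ℕ), ⋃ (k : ℕ), ⋃ (_ : k ≤ 2^n ∧ a < (k:ℝ)/2^n), ((F n k).2)ᶜ := by
        ext x
        simp only [Set.mem_setOf_eq, Set.mem_iUnion, Set.mem_compl_iff]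
        constructor
        · intro hax
          obtain ⟨n2, k2, h1, h2⟩ := dyadic_btwn ha hax
          obtain ⟨n, k, h3, h4⟩ := dyadic_btwn ha h1
          have hk2 : k2 ≤ 2^n2 := by
            have : (k2:ℝ)/2^n2 < 1 := lt_of_lt_of_le h2 (hle1 x)
            rw [div_lt_one (by positivity)] at this
            exact_mod_cast this.le
          have hk : k ≤ 2^n := by
            have : (k:ℝ)/2^n < 1 := lt_of_lt_of_le (h4.trans h2) (hle1 x)
            rw [div_lt_one (by positivity)] at this
            exact_mod_cast this.le
          refine ⟨n, k, ⟨hk, h3⟩, ?_⟩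
          intro hxC
          have hnat : k * 2^n2 < k2 * 2^n := by
            rw [div_lt_div_iff₀ (by positivity) (by positivity)] at h4
            exact_mod_cast h4
          have hsub : (F n k).2 ⊆ (F n2 k2).1 := crossCU n k n2 k2 hk hk2 hnat
          have : sInf (S x) ≤ (k2:ℝ)/2^n2 :=
            csInf_le (hBdd x) (Or.inr ⟨n2, k2, hk2, hsub hxC, rfl⟩)
          linarith
        · rintro ⟨n, k, ⟨hk, hak⟩, hxC⟩
          have hkey : (k:ℝ)/2^n ≤ sInf (S x) := by
            refine le_csInf (hSne x) ?_
            rintro r (rfl | ⟨m, j, hj, hx, rfl⟩)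
            · rw [div_le_one (by positivity)]
              exact_mod_cast hk
            · by_contra hcon
              push_neg at hcon
              have hnat : j * 2^n ≤ k * 2^m := by
                rw [div_lt_div_iff₀ (by positivity) (by positivity)] at hcon
                have : j * 2^n < k * 2^m := by exact_mod_cast hcon
                omega
              exact hxC (crossUC m j n k hj hk hnat hx)
          linarith
      rw [hset]
      refine @isOpen_iUnion X _ τ₁ _ fun n => @isOpen_iUnion X _ τ₁ _ fun k =>
        @isOpen_iUnion X _ τ₁ _ fun h => ?_
      exact @IsClosed.isOpen_compl X τ₁ _ ((inv n).1 k h.1).2.2.1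
    · have : {x | a < sInf (S x)} = Set.univ := by
        ext x
        simp only [Set.mem_setOf_eq, Set.mem_univ, iff_true]
        push_neg at ha
        exact lt_of_lt_of_le ha (hge0 x)
      rw [this]
      exact @isOpen_univ X τ₁
  · -- upper semicontinuity (τ₂)
    intro a
    by_cases ha : a ≤ 1
    · have hset : {x | sInf (S x) < a} =
          ⋃ (n : ℕ), ⋃ (k : ℕ), ⋃ (_ : k ≤ 2^n ∧ (k:ℝ)/2^n < a), (F n k).1 := by
        ext x
        simp only [Set.mem_setOf_eq, Set.mem_iUnion]
        constructor
        · intro h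
          obtain ⟨r, hr, hra⟩ := exists_lt_of_csInf_lt (hSne x) h
          rcases hr with rfl | ⟨n, k, hk, hx, rfl⟩
          · linarith
          · exact ⟨n, k, ⟨hk, hra⟩, hx⟩
        · rintro ⟨n, k, ⟨hk, hka⟩, hx⟩
          exact lt_of_le_of_lt (csInf_le (hBdd x) (Or.inr ⟨n, k, hk, hx, rfl⟩)) hka
      rw [hset]
      refine @isOpen_iUnion X _ τ₂ _ fun n => @isOpen_iUnion X _ τ₂ _ fun k =>
        @isOpen_iUnion X _ τ₂ _ fun h => ?_
      exact ((inv n).1 k h.1).1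
    · have : {x | sInf (S x) < a} = Set.univ := by
        ext x
        simp only [Set.mem_setOf_eq, Set.mem_univ, iff_true]
        push_neg at ha
        exact lt_of_le_of_lt (hle1 x) ha
      rw [this]
      exact @isOpen_univ X τ₂
  · -- f = 0 on A
    intro x hx
    have h0 : (0:ℝ) ∈ S x := by
      refine Or.inr ⟨0, 0, by norm_num, ?_, by norm_num⟩
      rw [hzero 0]
      exact hAO hx
    exact le_antisymm (csInf_le (hBdd x) h0) (hge0 x)
  · -- f = 1 on B
    intro x hx
    refine le_antisymm (hle1 x) ?_
    refine le_csInf (hSne x) ?_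
    rintro r (rfl | ⟨n, k, hk, hm, rfl⟩)
    · exact le_refl 1
    · exfalso
      rcases Nat.eq_or_lt_of_le hk with rfl | hklt
      · have : (F n (2^n)).1 = Bᶜ := by rw [htop n]
        rw [this] at hm
        exact hm hx
      · have hsub : (F n k).1 ⊆ (F n (2^n)).1 :=
          ((inv n).1 k hk).2.2.2.2.trans (hCU n k (2^n) hklt (le_refl _))
        have : (F n (2^n)).1 = Bᶜ := by rw [htop n]
        rw [this] at hsub
        exact hsub hm hx

end S9

/-- A bitopological ordered space `(X, τ₁, τ₂, ≼)` (order closed in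
`τ₁ × τ₂`) is pairwise normally ordered iff for every decreasing `τ₁`-closed `A` and
increasing `τ₂`-closed `B` with `A ∩ B = ∅` there is an increasing `f : X → [0,1]`,
`τ₁`-lower and `τ₂`-upper semicontinuous, with `f = 0` on `A` and `f = 1` on `B`. -/
theorem stmt9 {X : Type*} [PartialOrder X] (τ₁ τ₂ : TopologicalSpace X)
    (hcl : @IsClosed (X × X) (@instTopologicalSpaceProd X X τ₁ τ₂)
      {p : X × X | p.1 ≤ p.2}) :
    (∀ A B : Set X,
        (∀ x y, x ∈ A → y ≤ x → y ∈ A) → @IsClosed X τ₁ A →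
        (∀ x y, x ∈ B → x ≤ y → y ∈ B) → @IsClosed X τ₂ B →
        A ∩ B = ∅ →
        ∃ O₁ O₂ : Set X, @IsOpen X τ₂ O₁ ∧ (∀ x y, x ∈ O₁ → y ≤ x → y ∈ O₁) ∧ A ⊆ O₁ ∧
          @IsOpen X τ₁ O₂ ∧ (∀ x y, x ∈ O₂ → x ≤ y → y ∈ O₂) ∧ B ⊆ O₂ ∧
          O₁ ∩ O₂ = ∅) ↔
    (∀ A B : Set X,
        (∀ x y, x ∈ A → y ≤ x → y ∈ A) → @IsClosed X τ₁ A →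
        (∀ x y, x ∈ B → x ≤ y → y ∈ B) → @IsClosed X τ₂ B →
        A ∩ B = ∅ →
        ∃ f : X → ℝ,
          (∀ x, f x ∈ Set.Icc (0 : ℝ) 1) ∧
          (∀ x y, x ≤ y → f x ≤ f y) ∧
          (∀ a : ℝ, @IsOpen X τ₁ {x | a < f x}) ∧
          (∀ a : ℝ, @IsOpen X τ₂ {x | f x < a}) ∧
          (∀ x ∈ A, f x = 0) ∧ (∀ x ∈ B, f x = 1)) := by
  constructor
  · intro hPN A B hAd hAc hBi hBc hAB
    exact S9.urysohn hPN hAd hAc hBi hBc hAB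
  · intro hf A B hAd hAc hBi hBc hAB
    obtain ⟨f, hIcc, hmono, hlsc, husc, hA, hB⟩ := hf A B hAd hAc hBi hBc hAB
    refine ⟨{x | f x < 1/2}, {x | 1/2 < f x}, husc _, ?_, ?_, hlsc _, ?_, ?_, ?_⟩
    · intro x y hx hyx
      exact lt_of_le_of_lt (hmono y x hyx) hx
    · intro x hx
      show f x < 1/2
      rw [hA x hx]; norm_num
    · intro x y hx hxy
      exact lt_of_lt_of_le hx (hmono x y hxy)
    · intro x hx
      show (1:ℝ)/2 < f x
      rw [hB x hx]; norm_num
    · ext x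
      simp only [Set.mem_inter_iff, Set.mem_setOf_eq, Set.mem_empty_iff_false, iff_false,
        not_and]
      intro h1 h2
      linarith
end

section
/- Let (X, τ₁, τ₂, ≼) be a joincompact bitopological preordered space with ≼ closed in τ₁ × τ₂. If A ⊆ X is decreasing and O₁ is a τ₂-neighborhood of A (A ⊆ interior_{τ₂} O₁), then there exists a decreasing τ₂-open set O₂ with A ⊆ O₂ ⊆ O₁. -/
/-!
Let `K` be the complement of the `τ₂`-interior of `O₁`. It is `τ₂`-closed, hence closed and so
compact in the compact join topology, hence `τ₁`-compact. Since the preorder is closed in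
`τ₁ × τ₂`, the up-set of a `τ₁`-compact set is `τ₂`-closed, so the complement of the up-set of
`K` is a `τ₂`-open down-set; it contains the down-set `A`, which misses `K`, and is contained in
the `τ₂`-interior of `O₁`.
-/

open Topology

theorem IsClosed.isClosed_image_of_isCompact {X Y : Type*} [TopologicalSpace X]
    [TopologicalSpace Y] {R : Set (X × Y)} (hR : IsClosed R) {K : Set X} (hK : IsCompact K) :
    IsClosed {y | ∃ x ∈ K, (x, y) ∈ R} := by
  have := isCompact_iff_compactSpace.mp hK
  have hpre : IsClosed (Prod.map Subtype.val id ⁻¹' R : Set (K × Y)) :=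
    hR.preimage (continuous_subtype_val.prodMap continuous_id)
  convert isClosedMap_snd_of_compactSpace _ hpre using 1
  ext y
  simp

theorem isCompact_of_isClosed_of_compactSpace_inf {X : Type*} {τ₁ τ₂ : TopologicalSpace X}
    [@CompactSpace X (τ₁ ⊓ τ₂)] {K : Set X} (hK : IsClosed[τ₂] K) : @IsCompact X τ₁ K := by
  have hKinf : @IsCompact X (τ₁ ⊓ τ₂) K :=
    @IsClosed.isCompact X (τ₁ ⊓ τ₂) _ ‹_› (hK.mono inf_le_right)
  simpa using @IsCompact.image X X (τ₁ ⊓ τ₂) τ₁ K id hKinf (continuous_id_of_le inf_le_left)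

theorem isClosed_upperClosure_of_isCompact {X : Type*} [Preorder X] {τ₁ τ₂ : TopologicalSpace X}
    (hcl : @IsClosed (X × X) (@instTopologicalSpaceProd X X τ₁ τ₂) {p : X × X | p.1 ≤ p.2})
    {K : Set X} (hK : @IsCompact X τ₁ K) : IsClosed[τ₂] (upperClosure K : Set X) :=
  @IsClosed.isClosed_image_of_isCompact X X τ₁ τ₂ _ hcl K hK

theorem stmt10_general {X : Type*} [Preorder X] (τ₁ τ₂ : TopologicalSpace X)
    (hcl : @IsClosed (X × X) (@instTopologicalSpaceProd X X τ₁ τ₂)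
      {p : X × X | p.1 ≤ p.2})
    (hjc : @CompactSpace X (τ₁ ⊓ τ₂))
    (A O₁ : Set X)
    (hdec : ∀ x y, x ∈ A → y ≤ x → y ∈ A)
    (hnbhd : A ⊆ @interior X τ₂ O₁) :
    ∃ O₂ : Set X, @IsOpen X τ₂ O₂ ∧ (∀ x y, x ∈ O₂ → y ≤ x → y ∈ O₂) ∧
      A ⊆ O₂ ∧ O₂ ⊆ O₁ := by
  set K := (@interior X τ₂ O₁)ᶜ
  have hK : @IsCompact X τ₁ K :=
    isCompact_of_isClosed_of_compactSpace_inf (@isOpen_interior X τ₂ O₁).isClosed_compl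
  refine ⟨(upperClosure K : Set X)ᶜ, (isClosed_upperClosure_of_isCompact hcl hK).isOpen_compl,
    fun x y hx hyx => (upperClosure K).upper.compl hyx hx, ?_, ?_⟩
  · rintro a ha ⟨k, hk, hka⟩
    exact hk (hnbhd (hdec a k ha hka))
  · intro z hz
    by_contra hzO₁
    exact hz (subset_upperClosure fun hzU => hzO₁ (@interior_subset X τ₂ O₁ z hzU))

/-- In a joincompact bitopological preordered space `(X, τ₁, τ₂, ≼)`
(preorder closed in `τ₁ × τ₂`, join topology `τ₁ ∨ τ₂ = τ₁ ⊓ τ₂` compact and Hausdorff):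
if `A` is decreasing and `O₁` is a `τ₂`-neighborhood of `A` (i.e. `A ⊆ int_{τ₂} O₁`),
then there is a decreasing `τ₂`-open `O₂` with `A ⊆ O₂ ⊆ O₁`. -/
theorem stmt10 {X : Type*} [Preorder X] (τ₁ τ₂ : TopologicalSpace X)
    (hcl : @IsClosed (X × X) (@instTopologicalSpaceProd X X τ₁ τ₂)
      {p : X × X | p.1 ≤ p.2})
    (hjc : @CompactSpace X (τ₁ ⊓ τ₂)) (hT2 : @T2Space X (τ₁ ⊓ τ₂))
    (A O₁ : Set X)
    (hdec : ∀ x y, x ∈ A → y ≤ x → y ∈ A)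
    (hnbhd : A ⊆ @interior X τ₂ O₁) :
    ∃ O₂ : Set X, @IsOpen X τ₂ O₂ ∧ (∀ x y, x ∈ O₂ → y ≤ x → y ∈ O₂) ∧
      A ⊆ O₂ ∧ O₂ ⊆ O₁ :=
  stmt10_general τ₁ τ₂ hcl hjc A O₁ hdec hnbhd
end

section
/- Every joincompact bitopological ordered space is pairwise normally ordered: for every decreasing τ₁-closed set A and increasing τ₂-closed set B with A ∩ B = ∅, there exist a decreasing τ₂-open set containing A and an increasing τ₁-open set containing B which are disjoint. -/
/-!
The join topology is compact and finer than `τ₁` and `τ₂`, so every `τ₁`- or `τ₂`-closed set is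
compact in both. Closedness of `≤` in `τ₁ × τ₂` and the tube lemma then make the upper closure of
a `τ₁`-compact set `τ₂`-closed, and dually. Separating `B` from `A` by a `τ₁`-open `U ⊇ B` and a
`τ₂`-open `V ⊇ A` with no point of `U` below a point of `V`, the complements of `↑Vᶜ` and `↓Uᶜ`
do the job.
-/

open Topology

section BitopologicalOrder

variable {X : Type*}

theorem isCompact_of_isClosed_of_compactSpace_inf_s11 {t₁ t₂ : TopologicalSpace X}
    (h : @CompactSpace X (t₁ ⊓ t₂)) {s : Set X} (hs : IsClosed[t₁] s) : @IsCompact X t₂ s := by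
  have hs' : @IsCompact X (t₁ ⊓ t₂) s := @IsClosed.isCompact X (t₁ ⊓ t₂) s h (hs.mono inf_le_left)
  simpa using @IsCompact.image X X (t₁ ⊓ t₂) t₂ s id hs' (continuous_id_of_le inf_le_right)

variable [Preorder X] {τ₁ τ₂ : TopologicalSpace X}
  (hcl : @IsClosed (X × X) (@instTopologicalSpaceProd X X τ₁ τ₂) {p : X × X | p.1 ≤ p.2})
include hcl

theorem exists_isOpen_forall_not_le {S T : Set X} (hS : @IsCompact X τ₁ S)
    (hT : @IsCompact X τ₂ T) (h : ∀ s ∈ S, ∀ t ∈ T, ¬ s ≤ t) :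
    ∃ U V : Set X, IsOpen[τ₁] U ∧ IsOpen[τ₂] V ∧ S ⊆ U ∧ T ⊆ V ∧
      ∀ u ∈ U, ∀ v ∈ V, ¬ u ≤ v := by
  obtain ⟨U, V, hU, hV, hSU, hTV, hUV⟩ :=
    @generalized_tube_lemma X X τ₁ τ₂ S hS T hT _ hcl.isOpen_compl
      (fun p hp => h p.1 hp.1 p.2 hp.2)
  exact ⟨U, V, hU, hV, hSU, hTV, fun u hu v hv => hUV (Set.mk_mem_prod hu hv)⟩

theorem IsCompact.isClosed_upperClosure {S : Set X} (hS : @IsCompact X τ₁ S) :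
    IsClosed[τ₂] (upperClosure S : Set X) := by
  rw [← @isOpen_compl_iff X _ τ₂, @isOpen_iff_forall_mem_open X τ₂]
  intro y hy
  obtain ⟨U, V, -, hV, hSU, hyV, hUV⟩ := exists_isOpen_forall_not_le hcl hS
    (@isCompact_singleton X τ₂ y) fun s hs t ht hst => hy ⟨s, hs, ht ▸ hst⟩
  exact ⟨V, fun v hv ⟨s, hs, hsv⟩ => hUV s (hSU hs) v hv hsv, hV, hyV rfl⟩

theorem IsCompact.isClosed_lowerClosure {T : Set X} (hT : @IsCompact X τ₂ T) :
    IsClosed[τ₁] (lowerClosure T : Set X) := by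
  rw [← @isOpen_compl_iff X _ τ₁, @isOpen_iff_forall_mem_open X τ₁]
  intro x hx
  obtain ⟨U, V, hU, -, hxU, hTV, hUV⟩ := exists_isOpen_forall_not_le hcl
    (@isCompact_singleton X τ₁ x) hT fun s hs t ht hst => hx ⟨t, ht, hs ▸ hst⟩
  exact ⟨U, fun u hu ⟨t, ht, hut⟩ => hUV u hu t (hTV ht) hut, hU, hxU rfl⟩

end BitopologicalOrder

theorem stmt11_general {X : Type*} [PartialOrder X] (τ₁ τ₂ : TopologicalSpace X)
    (hcl : @IsClosed (X × X) (@instTopologicalSpaceProd X X τ₁ τ₂)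
      {p : X × X | p.1 ≤ p.2})
    (hjc : @CompactSpace X (τ₁ ⊓ τ₂)) :
    ∀ A B : Set X,
      (∀ x y, x ∈ A → y ≤ x → y ∈ A) → @IsClosed X τ₁ A →
      (∀ x y, x ∈ B → x ≤ y → y ∈ B) → @IsClosed X τ₂ B →
      A ∩ B = ∅ →
      ∃ O₁ O₂ : Set X, @IsOpen X τ₂ O₁ ∧ (∀ x y, x ∈ O₁ → y ≤ x → y ∈ O₁) ∧ A ⊆ O₁ ∧
        @IsOpen X τ₁ O₂ ∧ (∀ x y, x ∈ O₂ → x ≤ y → y ∈ O₂) ∧ B ⊆ O₂ ∧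
        O₁ ∩ O₂ = ∅ := by
  intro A B hAdec hAcl hBinc hBcl hAB
  have hjc' : @CompactSpace X (τ₂ ⊓ τ₁) := inf_comm τ₁ τ₂ ▸ hjc
  have hBA : ∀ b ∈ B, ∀ a ∈ A, ¬ b ≤ a := fun b hb a ha hba =>
    (Set.eq_empty_iff_forall_notMem.mp hAB) b ⟨hAdec a b ha hba, hb⟩
  obtain ⟨U, V, hU, hV, hBU, hAV, hUV⟩ := exists_isOpen_forall_not_le hcl
    (isCompact_of_isClosed_of_compactSpace_inf_s11 hjc' hBcl)
    (isCompact_of_isClosed_of_compactSpace_inf_s11 hjc hAcl) hBA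
  have hVc := isCompact_of_isClosed_of_compactSpace_inf_s11 hjc' (@IsOpen.isClosed_compl X τ₂ V hV)
  have hUc := isCompact_of_isClosed_of_compactSpace_inf_s11 hjc (@IsOpen.isClosed_compl X τ₁ U hU)
  refine ⟨(upperClosure Vᶜ : Set X)ᶜ, (lowerClosure Uᶜ : Set X)ᶜ,
    (hVc.isClosed_upperClosure hcl).isOpen_compl,
    fun x y hx hyx => (upperClosure Vᶜ).upper.compl hyx hx,
    fun a ha ⟨s, hs, hsa⟩ => hs (hAV (hAdec a s ha hsa)),
    (hUc.isClosed_lowerClosure hcl).isOpen_compl,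
    fun x y hx hxy => (lowerClosure Uᶜ).lower.compl hxy hx,
    fun b hb ⟨t, ht, hbt⟩ => ht (hBU (hBinc b t hb hbt)), ?_⟩
  refine Set.eq_empty_of_forall_notMem fun x ⟨hx₁, hx₂⟩ => ?_
  have hxV : x ∈ V := by_contra fun h => hx₁ (subset_upperClosure h)
  have hxU : x ∈ U := by_contra fun h => hx₂ (subset_lowerClosure h)
  exact hUV x hxU x hxV le_rfl

/-- Every joincompact bitopological ordered space (partial order closed in
`τ₁ × τ₂`, join topology `τ₁ ∨ τ₂ = τ₁ ⊓ τ₂` compact and Hausdorff) is pairwise normally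
ordered: disjoint decreasing `τ₁`-closed `A` and increasing `τ₂`-closed `B` can be
separated by a decreasing `τ₂`-open set and an increasing `τ₁`-open set. -/
theorem stmt11 {X : Type*} [PartialOrder X] (τ₁ τ₂ : TopologicalSpace X)
    (hcl : @IsClosed (X × X) (@instTopologicalSpaceProd X X τ₁ τ₂)
      {p : X × X | p.1 ≤ p.2})
    (hjc : @CompactSpace X (τ₁ ⊓ τ₂)) (hT2 : @T2Space X (τ₁ ⊓ τ₂)) :
    ∀ A B : Set X,
      (∀ x y, x ∈ A → y ≤ x → y ∈ A) → @IsClosed X τ₁ A →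
      (∀ x y, x ∈ B → x ≤ y → y ∈ B) → @IsClosed X τ₂ B →
      A ∩ B = ∅ →
      ∃ O₁ O₂ : Set X, @IsOpen X τ₂ O₁ ∧ (∀ x y, x ∈ O₁ → y ≤ x → y ∈ O₁) ∧ A ⊆ O₁ ∧
        @IsOpen X τ₁ O₂ ∧ (∀ x y, x ∈ O₂ → x ≤ y → y ∈ O₂) ∧ B ⊆ O₂ ∧
        O₁ ∩ O₂ = ∅ :=
  stmt11_general τ₁ τ₂ hcl hjc
end

section
/- Let (X, τ₁, τ₂, ≼) be a joincompact bitopological ordered space that is pairwise normally ordered and satisfies the order-Urysohn property. Then for all a, b ∈ X with ¬(a ≼ b), there exists an increasing function f : X → [0,1], τ₁-lower semicontinuous and τ₂-upper semicontinuous, with f(b) < f(a). -/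
/-- Let `(X, τ₁, τ₂, ≼)` be a joincompact bitopological ordered space
(order closed in `τ₁ × τ₂`, join topology compact Hausdorff) which is pairwise normally
ordered and satisfies the order-Urysohn property. Then for all `a, b` with `¬ a ≼ b`
there is an increasing, `τ₁`-lower and `τ₂`-upper semicontinuous `f : X → [0,1]` with
`f b < f a`. -/
theorem stmt12 {X : Type*} [PartialOrder X] (τ₁ τ₂ : TopologicalSpace X)
    (hcl : @IsClosed (X × X) (@instTopologicalSpaceProd X X τ₁ τ₂)
      {p : X × X | p.1 ≤ p.2})
    (hjc : @CompactSpace X (τ₁ ⊓ τ₂)) (hT2 : @T2Space X (τ₁ ⊓ τ₂))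
    (hnorm : ∀ A B : Set X,
      (∀ x y, x ∈ A → y ≤ x → y ∈ A) → @IsClosed X τ₁ A →
      (∀ x y, x ∈ B → x ≤ y → y ∈ B) → @IsClosed X τ₂ B →
      A ∩ B = ∅ →
      ∃ O₁ O₂ : Set X, @IsOpen X τ₂ O₁ ∧ (∀ x y, x ∈ O₁ → y ≤ x → y ∈ O₁) ∧ A ⊆ O₁ ∧
        @IsOpen X τ₁ O₂ ∧ (∀ x y, x ∈ O₂ → x ≤ y → y ∈ O₂) ∧ B ⊆ O₂ ∧ O₁ ∩ O₂ = ∅)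
    (hurysohn : ∀ A B : Set X,
      (∀ x y, x ∈ A → y ≤ x → y ∈ A) → @IsClosed X τ₁ A →
      (∀ x y, x ∈ B → x ≤ y → y ∈ B) → @IsClosed X τ₂ B →
      A ∩ B = ∅ →
      ∃ f : X → ℝ, (∀ x, f x ∈ Set.Icc (0 : ℝ) 1) ∧
        (∀ x y, x ≤ y → f x ≤ f y) ∧
        (∀ a : ℝ, @IsOpen X τ₁ {x | a < f x}) ∧
        (∀ a : ℝ, @IsOpen X τ₂ {x | f x < a}) ∧
        (∀ x ∈ A, f x = 0) ∧ (∀ x ∈ B, f x = 1)) :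
    ∀ a b : X, ¬ a ≤ b →
      ∃ f : X → ℝ, (∀ x, f x ∈ Set.Icc (0 : ℝ) 1) ∧
        (∀ x y, x ≤ y → f x ≤ f y) ∧
        (∀ c : ℝ, @IsOpen X τ₁ {x | c < f x}) ∧
        (∀ c : ℝ, @IsOpen X τ₂ {x | f x < c}) ∧
        f b < f a := by
  intro a b hab
  obtain ⟨f, hf01, hmono, ho1, ho2, hA, hB⟩ :=
    hurysohn {x | x ≤ b} {x | a ≤ x}
      (fun x y hx hyx => le_trans hyx hx)
      (by
        have hc : @Continuous X (X × X) τ₁ (@instTopologicalSpaceProd X X τ₁ τ₂)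
            (fun x => (x, b)) :=
          @Continuous.prodMk X X X τ₁ τ₂ τ₁ _ _
            (@continuous_id X τ₁) (@continuous_const X X τ₁ τ₂ b)
        exact @IsClosed.preimage X (X × X) τ₁ (@instTopologicalSpaceProd X X τ₁ τ₂)
          _ hc _ hcl)
      (fun x y hx hxy => le_trans hx hxy)
      (by
        have hc : @Continuous X (X × X) τ₂ (@instTopologicalSpaceProd X X τ₁ τ₂)
            (fun x => (a, x)) :=
          @Continuous.prodMk X X X τ₁ τ₂ τ₂ _ _
            (@continuous_const X X τ₂ τ₁ a) (@continuous_id X τ₂)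
        exact @IsClosed.preimage X (X × X) τ₂ (@instTopologicalSpaceProd X X τ₁ τ₂)
          _ hc _ hcl)
      (by
        ext x
        simp only [Set.mem_inter_iff, Set.mem_setOf_eq, Set.mem_empty_iff_false, iff_false]
        rintro ⟨h1, h2⟩
        exact hab (le_trans h2 h1))
  refine ⟨f, hf01, hmono, ho1, ho2, ?_⟩
  rw [hA b le_rfl, hB a le_rfl]
  norm_num
end

section
/- Let (X, ≼) be a complete lattice, σ the Scott topology and ω the lower topology on X. Then the join topology σ ∨ ω is compact. -/
open Set Topology Filter

/-- For a complete lattice `(X, ≼)`, the join of the Scott topology and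
the lower topology (the Lawson topology; in Mathlib's lattice of topologies, where `≤`
means finer, the join topology is the infimum `σ ⊓ ω`) is compact. -/
theorem stmt16 {X : Type*} [CompleteLattice X] :
    @CompactSpace X (Topology.scott X Set.univ ⊓ Topology.lower X) := by
  refine @CompactSpace.mk X (Topology.scott X Set.univ ⊓ Topology.lower X) ?_
  rw [@isCompact_iff_ultrafilter_le_nhds X (Topology.scott X Set.univ ⊓ Topology.lower X)]
  intro f _
  set d : Set X := sInf '' {A : Set X | A ∈ f} with hd
  set a : X := sSup d with ha
  have hlub : IsLUB d a := isLUB_sSup d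
  refine ⟨a, mem_univ a, ?_⟩
  show (f : Filter X) ≤ @nhds X (Topology.scott X Set.univ ⊓ Topology.lower X) a
  rw [@_root_.nhds_inf X (Topology.scott X Set.univ) (Topology.lower X) a]
  refine le_inf ?_ ?_
  · -- Scott topology
    letI : TopologicalSpace X := Topology.scott X Set.univ
    haveI hS : Topology.IsScott X Set.univ := ⟨rfl⟩
    rw [le_nhds_iff]
    intro U haU hU
    rw [Topology.IsScott.isOpen_iff_isUpperSet_and_dirSupInaccOn (D := Set.univ)] at hU
    obtain ⟨hup, hinacc⟩ := hU
    have hdne : d.Nonempty := ⟨sInf univ, mem_image_of_mem _ f.univ_sets⟩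
    have hdir : DirectedOn (· ≤ ·) d := by
      rintro _ ⟨A, hA, rfl⟩ _ ⟨B, hB, rfl⟩
      exact ⟨sInf (A ∩ B), mem_image_of_mem _ (f.inter_sets hA hB),
        sInf_le_sInf inter_subset_left, sInf_le_sInf inter_subset_right⟩
    obtain ⟨_, ⟨A, hA, rfl⟩, hxU⟩ := hinacc (mem_univ d) hdne hdir hlub haU
    exact mem_of_superset hA fun y hy => hup (sInf_le hy) hxU
  · -- lower topology
    show (f : Filter X) ≤ @nhds X (Topology.lower X) a
    rw [Topology.lower, TopologicalSpace.nhds_generateFrom]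
    refine le_iInf₂ fun s hs => ?_
    obtain ⟨has, x, rfl⟩ := hs
    rw [le_principal_iff]
    by_contra hns
    have hns' : Ici x ∈ f := by
      rcases f.mem_or_compl_mem (Ici x) with h | h
      · exact h
      · exact absurd h hns
    have : x ≤ a := by
      have : sInf (Ici x) ∈ d := mem_image_of_mem _ hns'
      calc x = sInf (Ici x) := (csInf_Ici).symm
        _ ≤ a := le_sSup this
    exact has this
end

section
/- Let (X, ≼) be a continuous lattice. Then for any x, y ∈ X with ¬(x ≼ y), there exist a Scott-open increasing set U containing x and a decreasing set V that is open for the lower topology and contains y, with U ∩ V = ∅. Consequently, the graph of ≼ is closed in X × X for the product of the Scott topology with the lower topology. -/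
/-!
If `¬ x ≤ y` in a continuous lattice, then, `x` being the supremum of the elements way below it,
some `u ≪ x` has `¬ u ≤ y`. The set `⇑u = {z | u ≪ z}` is a Scott-open upper set containing `x`,
`(↑u)ᶜ` is a lower-open lower set containing `y`, and they are disjoint because `u ≪ z` implies
`u ≤ z`. These boxes `⇑u × (↑u)ᶜ` cover the complement of the graph of `≤`.
-/

/-- `u` is way-below `x`: every directed set whose supremum dominates `x`
contains an element above `u`. -/
def WayBelow {X : Type*} [CompleteLattice X] (u x : X) : Prop :=
  ∀ D : Set X, D.Nonempty → DirectedOn (· ≤ ·) D → x ≤ sSup D → ∃ d ∈ D, u ≤ d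

open Set Topology

theorem isClosed_setOf_of_separated {α β : Type*} [TopologicalSpace α] [TopologicalSpace β]
    {r : α → β → Prop}
    (h : ∀ x y, ¬ r x y → ∃ U V, IsOpen U ∧ IsOpen V ∧ x ∈ U ∧ y ∈ V ∧
      ∀ a ∈ U, ∀ b ∈ V, ¬ r a b) :
    IsClosed {p : α × β | r p.1 p.2} := by
  refine isOpen_compl_iff.1 <| isOpen_prod_iff.2 fun x y hxy => ?_
  obtain ⟨U, V, hU, hV, hxU, hyV, hUV⟩ := h x y hxy
  exact ⟨U, V, hU, hV, hxU, hyV, fun p ⟨hp₁, hp₂⟩ => hUV p.1 hp₁ p.2 hp₂⟩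

namespace WayBelow

variable {X : Type*} [CompleteLattice X] {u v x y : X}

theorem le (h : WayBelow u x) : u ≤ x := by
  obtain ⟨d, rfl, hud⟩ := h {x} (singleton_nonempty x) (directedOn_singleton x) (sSup_singleton).ge
  exact hud

theorem mono_left (hvu : v ≤ u) (h : WayBelow u x) : WayBelow v x := fun D hne hdir hsup =>
  let ⟨d, hd, hud⟩ := h D hne hdir hsup
  ⟨d, hd, hvu.trans hud⟩

theorem mono_right (hxy : x ≤ y) (h : WayBelow u x) : WayBelow u y := fun D hne hdir hsup =>
  h D hne hdir (hxy.trans hsup)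

theorem bot (x : X) : WayBelow ⊥ x := fun _ ⟨d, hd⟩ _ _ => ⟨d, hd, bot_le⟩

theorem sup (hu : WayBelow u x) (hv : WayBelow v x) : WayBelow (u ⊔ v) x :=
  fun D hne hdir hsup => by
    obtain ⟨d₁, hd₁, hud₁⟩ := hu D hne hdir hsup
    obtain ⟨d₂, hd₂, hvd₂⟩ := hv D hne hdir hsup
    obtain ⟨d, hd, hd₁d, hd₂d⟩ := hdir d₁ hd₁ d₂ hd₂
    exact ⟨d, hd, sup_le (hud₁.trans hd₁d) (hvd₂.trans hd₂d)⟩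

end WayBelow

section ContinuousLattice

variable {X : Type*} [CompleteLattice X]

theorem isUpperSet_setOf_wayBelow (u : X) : IsUpperSet {z | WayBelow u z} :=
  fun _ _ hab h => h.mono_right hab

/-- The elements way below some member of `d` form a directed set whose supremum, by continuity,
is again `sSup d`. -/
theorem dirSupInacc_setOf_wayBelow (hcont : ∀ x : X, x ≤ sSup {u | WayBelow u x}) (u : X) :
    DirSupInacc {z | WayBelow u z} := by
  intro d ⟨e₀, he₀⟩ hdir a hlub (hua : WayBelow u a)
  set E : Set X := {v | ∃ e ∈ d, WayBelow v e}
  have hE_nonempty : E.Nonempty := ⟨⊥, e₀, he₀, WayBelow.bot e₀⟩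
  have hE_directed : DirectedOn (· ≤ ·) E := by
    rintro v₁ ⟨e₁, he₁, hv₁⟩ v₂ ⟨e₂, he₂, hv₂⟩
    obtain ⟨e, he, he₁e, he₂e⟩ := hdir e₁ he₁ e₂ he₂
    exact ⟨v₁ ⊔ v₂, ⟨e, he, (hv₁.mono_right he₁e).sup (hv₂.mono_right he₂e)⟩,
      le_sup_left, le_sup_right⟩
  have ha_le : a ≤ sSup E := by
    rw [← hlub.sSup_eq]
    exact sSup_le fun e he => (hcont e).trans (sSup_le_sSup fun v hv => ⟨e, he, hv⟩)
  obtain ⟨v, ⟨e, he, hve⟩, huv⟩ := hua E hE_nonempty hE_directed ha_le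
  exact ⟨e, he, hve.mono_left huv⟩

theorem Topology.IsScott.isOpen_setOf_wayBelow [TopologicalSpace X] [IsScott X univ]
    (hcont : ∀ x : X, x ≤ sSup {u | WayBelow u x}) (u : X) : IsOpen {z | WayBelow u z} :=
  IsScott.isOpen_iff_isUpperSet_and_dirSupInaccOn.2
    ⟨isUpperSet_setOf_wayBelow u, dirSupInaccOn_univ.2 (dirSupInacc_setOf_wayBelow hcont u)⟩

theorem exists_wayBelow_not_le (hcont : ∀ x : X, x ≤ sSup {u | WayBelow u x}) {x y : X}
    (hxy : ¬ x ≤ y) : ∃ u, WayBelow u x ∧ ¬ u ≤ y := by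
  by_contra! h
  exact hxy ((hcont x).trans (sSup_le h))

end ContinuousLattice

/-- In a continuous lattice `(X, ≼)` (every element is the supremum of the
elements way-below it), whenever `¬ x ≼ y` there are a Scott-open increasing set `U ∋ x`
and a decreasing lower-topology-open set `V ∋ y` with `U ∩ V = ∅`; consequently the
graph of `≼` is closed in `X × X` for the product of the Scott and lower topologies. -/
theorem stmt17 {X : Type*} [CompleteLattice X]
    (hcont : ∀ x : X, x = sSup {u | WayBelow u x}) :
    (∀ x y : X, ¬ x ≤ y →
      ∃ U V : Set X,
        @IsOpen X (Topology.scott X Set.univ) U ∧ IsUpperSet U ∧ x ∈ U ∧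
        @IsOpen X (Topology.lower X) V ∧ IsLowerSet V ∧ y ∈ V ∧
        U ∩ V = ∅) ∧
    @IsClosed (X × X)
      (@instTopologicalSpaceProd X X (Topology.scott X Set.univ) (Topology.lower X))
      {p : X × X | p.1 ≤ p.2} := by
  have hcont_le : ∀ x : X, x ≤ sSup {u | WayBelow u x} := fun x => (hcont x).le
  have separation : ∀ x y : X, ¬ x ≤ y → ∃ U V : Set X,
      IsOpen[scott X univ] U ∧ IsUpperSet U ∧ x ∈ U ∧
      IsOpen[lower X] V ∧ IsLowerSet V ∧ y ∈ V ∧ U ∩ V = ∅ := by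
    intro x y hxy
    obtain ⟨u, hux, huy⟩ := exists_wayBelow_not_le hcont_le hxy
    refine ⟨{z | WayBelow u z}, (Ici u)ᶜ,
      @IsScott.isOpen_setOf_wayBelow X _ (scott X univ) (@IsScott.mk X univ _ (scott X univ) rfl)
        hcont_le u,
      isUpperSet_setOf_wayBelow u, hux, TopologicalSpace.isOpen_generateFrom_of_mem ⟨u, rfl⟩,
      (isUpperSet_Ici u).compl, huy, ?_⟩
    exact eq_empty_of_forall_notMem fun z ⟨huz, hz⟩ => hz huz.le
  refine ⟨separation, @isClosed_setOf_of_separated X X (scott X univ) (lower X) _ ?_⟩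
  intro x y hxy
  obtain ⟨U, V, hU, -, hxU, hV, hV_lower, hyV, hUV⟩ := separation x y hxy
  exact ⟨U, V, hU, hV, hxU, hyV, fun a ha b hb hab =>
    eq_empty_iff_forall_notMem.1 hUV a ⟨ha, hV_lower hab hb⟩⟩
end
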